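/- Let 1 < β ≤ 2, let M ≥ 2 be an integer, let K > 0, h > 0, σ ∈ (0,1], and let c > 0 (in the paper, c = ĉ_0^{(n)} > 0). Define r_0 = g_0^{(β)} and r_k = g_k^{(β)} + g_{k−(M−1)}^{(β)} for 1 ≤ k ≤ M−2. Then the (M−1)×(M−1) circulant matrix C with entries C_{ij} = c·δ_{ij} + σ K h^{−β} r_{(i−j) mod (M−1)} for 1 ≤ i, j ≤ M−1 (the R. Chan-based circulant preconditioner) is symmetric and positive definite. -/

import Mathlib

open Finset

/-- Pointwise bound `-(a*x*y) ≤ |a|*(x^2+y^2)/2`. -/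
lemma pointwise_bound (a x y : ℝ) : -(|a| * (x ^ 2 + y ^ 2) / 2) ≤ x * (a * y) := by
  have h6 : 0 ≤ |a| + a := by have := neg_abs_le a; linarith
  have h7 : 0 ≤ |a| - a := by have := le_abs_self a; linarith
  nlinarith [mul_nonneg h6 (sq_nonneg (x + y)), mul_nonneg h7 (sq_nonneg (x - y))]

/-- Symmetric strictly diagonally dominant real matrices (dominance margin `c > 0`)
are positive definite. -/
lemma posDef_of_dominant {n : ℕ} (A : Matrix (Fin n) (Fin n) ℝ) (hA : A.IsSymm)
    (c : ℝ) (hc : 0 < c)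
    (hdom : ∀ i, (∑ j ∈ univ.erase i, |A i j|) + c ≤ A i i) : A.PosDef := by
  have hsymm : ∀ i j, A j i = A i j := fun i j => by
    conv_lhs => rw [← hA]
    rfl
  rw [Matrix.posDef_iff_dotProduct_mulVec]
  constructor
  · rw [Matrix.IsHermitian]
    ext i j
    simp [Matrix.conjTranspose_apply, hsymm]
  intro x hx
  have hstar : star x = x := rfl
  rw [hstar]
  have hexp : dotProduct x (A.mulVec x) = ∑ i, ∑ j, x i * (A i j * x j) := by
    simp [dotProduct, Matrix.mulVec, Finset.mul_sum]
  rw [hexp]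
  -- D i j : off-diagonal absolute values
  set D : Fin n → Fin n → ℝ := fun i j => if i = j then 0 else |A i j| with hD
  have hDsymm : ∀ i j, D i j = D j i := by
    intro i j
    simp only [hD]
    by_cases h : i = j
    · simp [h]
    · have h' : ¬ j = i := fun hji => h hji.symm
      simp [h, h', hsymm]
  have hDsum : ∀ i, (∑ j, D i j) + c ≤ A i i := by
    intro i
    have : (∑ j, D i j) = ∑ j ∈ univ.erase i, |A i j| := by
      rw [← Finset.add_sum_erase _ _ (mem_univ i)]
      simp only [hD, if_pos rfl, zero_add]
      exact Finset.sum_congr rfl fun j hj => by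
        simp [hD, Ne.symm (Finset.ne_of_mem_erase hj)]
    rw [this]; exact hdom i
  have key : ∀ i j, (if i = j then A i i * x i ^ 2 else 0) - D i j * (x i ^ 2 + x j ^ 2) / 2
      ≤ x i * (A i j * x j) := by
    intro i j
    by_cases h : i = j
    · subst h
      simp only [if_pos rfl, hD]
      simp [sq]
      ring_nf
      nlinarith [sq_nonneg (x i)]
    · simp only [if_neg h, hD, zero_sub]
      exact pointwise_bound (A i j) (x i) (x j)
  have step1 : ∑ i, ∑ j, ((if i = j then A i i * x i ^ 2 else 0) - D i j * (x i ^ 2 + x j ^ 2) / 2)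
      ≤ ∑ i, ∑ j, x i * (A i j * x j) :=
    Finset.sum_le_sum fun i _ => Finset.sum_le_sum fun j _ => key i j
  -- compute the lower bound
  have hdiag : ∀ i : Fin n, (∑ j, if i = j then A i i * x i ^ 2 else 0) = A i i * x i ^ 2 := by
    intro i; simp
  have hswap : ∑ i, ∑ j, D i j * x j ^ 2 = ∑ i, ∑ j, D i j * x i ^ 2 := by
    rw [Finset.sum_comm]
    refine Finset.sum_congr rfl fun j _ => Finset.sum_congr rfl fun i _ => ?_
    rw [hDsymm]
  have lower : ∑ i, (A i i - ∑ j, D i j) * x i ^ 2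
      ≤ ∑ i, ∑ j, x i * (A i j * x j) := by
    refine le_trans (le_of_eq ?_) step1
    rw [Finset.sum_congr rfl (fun i (_ : i ∈ univ) => Finset.sum_sub_distrib
      (f := fun j => if i = j then A i i * x i ^ 2 else 0)
      (g := fun j => D i j * (x i ^ 2 + x j ^ 2) / 2))]
    rw [Finset.sum_sub_distrib]
    have h1 : ∑ i, ∑ j, (if i = j then A i i * x i ^ 2 else 0) = ∑ i, A i i * x i ^ 2 :=
      Finset.sum_congr rfl fun i _ => hdiag i
    have h2 : ∑ i, ∑ j, D i j * (x i ^ 2 + x j ^ 2) / 2 = ∑ i, (∑ j, D i j) * x i ^ 2 := by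
      have : ∀ i j : Fin n, D i j * (x i ^ 2 + x j ^ 2) / 2
          = D i j * x i ^ 2 / 2 + D i j * x j ^ 2 / 2 := fun i j => by ring
      simp_rw [this, Finset.sum_add_distrib, ← Finset.sum_div]
      rw [hswap, add_halves]
      exact Finset.sum_congr rfl fun i _ => (Finset.sum_mul _ _ _).symm
    rw [h1, h2]
    rw [← Finset.sum_sub_distrib]
    exact Finset.sum_congr rfl fun i _ => by ring
  have final : ∑ i, c * x i ^ 2 ≤ ∑ i, (A i i - ∑ j, D i j) * x i ^ 2 := by
    refine Finset.sum_le_sum fun i _ => ?_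
    have := hDsum i
    nlinarith [sq_nonneg (x i)]
  have hpos : 0 < ∑ i, c * x i ^ 2 := by
    obtain ⟨i, hi⟩ := Function.ne_iff.mp hx
    refine Finset.sum_pos' (fun j _ => by positivity) ⟨i, mem_univ i, mul_pos hc (lt_of_le_of_ne (sq_nonneg _) (Ne.symm (pow_ne_zero 2 hi)))⟩
  linarith


open Finset

/-- The fractional centred difference coefficients
`g_k^{(β)} = (−1)^k Γ(β+1) / (Γ(β/2 − k + 1) Γ(β/2 + k + 1))`. -/
noncomputable def g (β : ℝ) (k : ℤ) : ℝ :=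
  (-1 : ℝ) ^ k * Real.Gamma (β + 1) /
    (Real.Gamma (β / 2 - k + 1) * Real.Gamma (β / 2 + k + 1))

noncomputable def u (β : ℝ) (k : ℤ) : ℝ :=
  (-1 : ℝ) ^ k * Real.Gamma β / (Real.Gamma (β / 2 + k + 1) * Real.Gamma (β / 2 - k))

lemma Gamma_eq_div (x : ℝ) : Real.Gamma x = Real.Gamma (x + 1) / x := by
  rcases eq_or_ne x 0 with h | h
  · simp [h, Real.Gamma_zero]
  · rw [Real.Gamma_add_one h, mul_div_cancel_left₀ _ h]

lemma neg_one_zpow_neg (k : ℤ) : (-1 : ℝ) ^ (-k) = (-1 : ℝ) ^ k := by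
  rw [zpow_neg]
  rcases Int.even_or_odd k with h | h
  · simp [h.neg_one_zpow]
  · simp [h.neg_one_zpow, inv_neg_one]

lemma g_even (β : ℝ) (k : ℤ) : g β (-k) = g β k := by
  unfold g
  rw [neg_one_zpow_neg, Int.cast_neg]
  rw [show β / 2 - -(k : ℝ) + 1 = β / 2 + k + 1 by ring,
    show β / 2 + -(k : ℝ) + 1 = β / 2 - k + 1 by ring, mul_comm]
  ring

lemma g_zero_pos {β : ℝ} (hβ : 0 < β) : 0 < g β 0 := by
  unfold g
  simp only [zpow_zero, one_mul, Int.cast_zero, sub_zero, add_zero]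
  have h1 : 0 < Real.Gamma (β + 1) := Real.Gamma_pos_of_pos (by linarith)
  have h2 : 0 < Real.Gamma (β / 2 + 1) := Real.Gamma_pos_of_pos (by linarith)
  positivity

/-- sign of Gamma at `β/2 - m` -/
lemma sign_gamma {β : ℝ} (hβ1 : 0 < β) (hβ2 : β ≤ 2) (m : ℕ) :
    0 ≤ (-1 : ℝ) ^ m * Real.Gamma (β / 2 - m) := by
  induction m with
  | zero => simpa using (Real.Gamma_pos_of_pos (by linarith)).le
  | succ m ih =>
    have e1 : β / 2 - ((m : ℝ) + 1) + 1 = β / 2 - m := by ring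
    have h := Gamma_eq_div (β / 2 - ((m : ℝ) + 1))
    rw [e1] at h
    push_cast
    rw [h, pow_succ]
    have e2 : β / 2 - ((m : ℝ) + 1) = -(((m : ℝ) + 1) - β / 2) := by ring
    rw [e2, div_neg]
    have e3 : (-1 : ℝ) ^ m * -1 * -(Real.Gamma (β / 2 - m) / (((m : ℝ) + 1) - β / 2))
        = ((-1 : ℝ) ^ m * Real.Gamma (β / 2 - m)) / (((m : ℝ) + 1) - β / 2) := by ring
    rw [e3]
    have hden : (0 : ℝ) ≤ ((m : ℝ) + 1) - β / 2 := by
      have : (0 : ℝ) ≤ (m : ℝ) := Nat.cast_nonneg m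
      linarith
    exact div_nonneg ih hden

lemma g_nonpos_nat {β : ℝ} (hβ1 : 0 < β) (hβ2 : β ≤ 2) (m : ℕ) : g β ((m : ℤ) + 1) ≤ 0 := by
  unfold g
  have hb : 0 < Real.Gamma (β / 2 + ((m : ℤ) + 1 : ℤ) + 1) := by
    apply Real.Gamma_pos_of_pos; push_cast; positivity
  have hA : 0 < Real.Gamma (β + 1) := Real.Gamma_pos_of_pos (by linarith)
  have harg : β / 2 - ((m : ℤ) + 1 : ℤ) + 1 = β / 2 - m := by push_cast; ring
  rw [harg]
  have hsign := sign_gamma hβ1 hβ2 m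
  have hzp : ((-1 : ℝ) ^ ((m : ℤ) + 1)) = -(-1 : ℝ) ^ m := by
    rw [zpow_add_one₀ (by norm_num), zpow_natCast]; ring
  rw [hzp]
  rcases eq_or_ne (Real.Gamma (β / 2 - m)) 0 with h0 | h0
  · rw [h0, zero_mul, div_zero]
  · have hne : (-1 : ℝ) ^ m * Real.Gamma (β / 2 - m) ≠ 0 := by
      intro h; apply h0
      rcases mul_eq_zero.mp h with h | h
      · exact absurd h (by positivity)
      · exact h
    have hpos : 0 < (-1 : ℝ) ^ m * Real.Gamma (β / 2 - m) := lt_of_le_of_ne hsign (Ne.symm hne)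
    rcases Nat.even_or_odd m with he | ho
    · have hs : (-1 : ℝ) ^ m = 1 := he.neg_one_pow
      rw [hs] at hpos ⊢
      rw [one_mul] at hpos
      refine div_nonpos_iff.mpr (Or.inr ⟨by linarith, by positivity⟩)
    · have hs : (-1 : ℝ) ^ m = -1 := ho.neg_one_pow
      rw [hs] at hpos ⊢
      have hneg : Real.Gamma (β / 2 - m) < 0 := by nlinarith
      refine div_nonpos_iff.mpr (Or.inl ⟨by linarith, ?_⟩)
      exact mul_nonpos_iff.mpr (Or.inr ⟨hneg.le, hb.le⟩)

lemma g_nonpos {β : ℝ} (hβ1 : 0 < β) (hβ2 : β ≤ 2) {k : ℤ} (hk : k ≠ 0) : g β k ≤ 0 := by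
  rcases lt_or_gt_of_ne hk with h | h
  · obtain ⟨m, hm⟩ : ∃ m : ℕ, k = -((m : ℤ) + 1) := ⟨(-k - 1).toNat, by omega⟩
    rw [hm, g_even]
    exact g_nonpos_nat hβ1 hβ2 m
  · obtain ⟨m, hm⟩ : ∃ m : ℕ, k = (m : ℤ) + 1 := ⟨(k - 1).toNat, by omega⟩
    rw [hm]
    exact g_nonpos_nat hβ1 hβ2 m

lemma u_neg (β : ℝ) (k : ℤ) : u β (-k - 1) = -u β k := by
  unfold u
  have h1 : (-1 : ℝ) ^ (-k - 1) = -(-1 : ℝ) ^ k := by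
    rw [zpow_sub_one₀ (by norm_num), neg_one_zpow_neg, inv_neg_one]
    ring
  rw [h1]
  push_cast
  rw [show β / 2 + (-(k : ℝ) - 1) + 1 = β / 2 - k by ring,
    show β / 2 - (-(k : ℝ) - 1) = β / 2 + k + 1 by ring, mul_comm]
  ring

/-- Pascal-type identity: `g β k = u β k - u β (k-1)`. -/
lemma pascal {β : ℝ} (hβ : 0 < β) (k : ℤ) : g β k = u β k - u β (k - 1) := by
  unfold g u
  have h1 : (-1 : ℝ) ^ (k - 1) = -(-1 : ℝ) ^ k := by
    rw [zpow_sub_one₀ (by norm_num), inv_neg_one]; ring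
  rw [h1]
  push_cast
  rw [show β / 2 + ((k : ℝ) - 1) + 1 = β / 2 + k by ring,
    show β / 2 - ((k : ℝ) - 1) = β / 2 - k + 1 by ring]
  set a := β / 2 - (k : ℝ) with ha
  set b := β / 2 + (k : ℝ) with hb
  have hab : a + b = β := by rw [ha, hb]; ring
  have hzp : (-1 : ℝ) ^ k ≠ 0 := by
    rcases Int.even_or_odd k with h | h
    · simp [h.neg_one_zpow]
    · simp [h.neg_one_zpow]
  rw [show β / 2 - (k : ℝ) + 1 = a + 1 by rw [ha], show β / 2 + (k : ℝ) + 1 = b + 1 by rw [hb]]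
  have hgb : 0 < Real.Gamma β := Real.Gamma_pos_of_pos hβ
  have hgb1 : 0 < Real.Gamma (β + 1) := Real.Gamma_pos_of_pos (by linarith)
  rcases eq_or_ne a 0 with ha0 | ha0
  · have hbβ : b = β := by linarith [hab]
    rw [ha0, hbβ, Real.Gamma_zero, zero_add, Real.Gamma_one, mul_zero, div_zero, zero_sub,
      mul_one, one_mul, mul_div_assoc, div_self hgb1.ne', mul_one, neg_mul, neg_div,
      mul_div_assoc, div_self hgb.ne', mul_one, neg_neg]
  rcases eq_or_ne b 0 with hb0 | hb0
  · have haβ : a = β := by linarith [hab]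
    rw [hb0, haβ, Real.Gamma_zero, zero_add, Real.Gamma_one, mul_one, one_mul, zero_mul,
      div_zero, sub_zero, mul_div_assoc, div_self hgb1.ne', mul_one,
      mul_div_assoc, div_self hgb.ne', mul_one]
  rcases eq_or_ne (Real.Gamma a) 0 with hga | hga
  · have hga1 : Real.Gamma (a + 1) = 0 := by rw [Real.Gamma_add_one ha0, hga, mul_zero]
    rw [hga, hga1]
    simp
  rcases eq_or_ne (Real.Gamma b) 0 with hgb0 | hgb0
  · have hgb1' : Real.Gamma (b + 1) = 0 := by rw [Real.Gamma_add_one hb0, hgb0, mul_zero]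
    rw [hgb0, hgb1']
    simp
  rw [Real.Gamma_add_one ha0, Real.Gamma_add_one hb0, ← hab,
    show a + b + 1 = (a + b) + 1 by ring, Real.Gamma_add_one (by rw [hab]; exact hβ.ne')]
  field_simp
  ring

lemma u_nonneg {β : ℝ} (hβ1 : 0 < β) (hβ2 : β ≤ 2) (m : ℕ) : 0 ≤ u β (m : ℤ) := by
  unfold u
  have hzp : ((-1 : ℝ) ^ (m : ℤ)) = (-1 : ℝ) ^ m := zpow_natCast _ _
  rw [hzp]
  have hgb : 0 < Real.Gamma β := Real.Gamma_pos_of_pos hβ1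
  have hb : 0 < Real.Gamma (β / 2 + (m : ℤ) + 1) := by
    apply Real.Gamma_pos_of_pos; push_cast; positivity
  have hsign := sign_gamma hβ1 hβ2 m
  have harg : β / 2 - ((m : ℤ) : ℝ) = β / 2 - (m : ℕ) := by push_cast; ring
  rw [harg]
  rcases eq_or_ne (Real.Gamma (β / 2 - (m : ℕ))) 0 with h0 | h0
  · rw [h0, mul_zero, div_zero]
  · rcases Nat.even_or_odd m with he | ho
    · have hs : (-1 : ℝ) ^ m = 1 := he.neg_one_pow
      rw [hs] at hsign ⊢
      rw [one_mul] at hsign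
      have : 0 < Real.Gamma (β / 2 - (m : ℕ)) := lt_of_le_of_ne hsign (Ne.symm h0)
      positivity
    · have hs : (-1 : ℝ) ^ m = -1 := ho.neg_one_pow
      rw [hs] at hsign ⊢
      have hneg : Real.Gamma (β / 2 - (m : ℕ)) < 0 := by
        rcases lt_trichotomy (Real.Gamma (β / 2 - (m : ℕ))) 0 with h | h | h
        · exact h
        · exact absurd h h0
        · nlinarith
      rw [neg_one_mul, neg_div]
      have : Real.Gamma β / (Real.Gamma (β / 2 + (m : ℤ) + 1) * Real.Gamma (β / 2 - (m : ℕ))) ≤ 0 := by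
        apply div_nonpos_iff.mpr (Or.inl ⟨hgb.le, ?_⟩)
        exact mul_nonpos_iff.mpr (Or.inl ⟨hb.le, hneg.le⟩)
      linarith

/-- Telescoping: symmetric partial sums of `g` equal `2 u m`. -/
lemma sum_g {β : ℝ} (hβ : 0 < β) (m : ℕ) :
    g β 0 + ∑ k ∈ Finset.range m, (g β ((k : ℤ) + 1) + g β (-(k : ℤ) - 1)) = 2 * u β (m : ℤ) := by
  induction m with
  | zero =>
    rw [Finset.sum_range_zero, add_zero, pascal hβ 0]
    have := u_neg β 0
    rw [show -(0:ℤ) - 1 = 0 - 1 by ring] at this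
    rw [this]
    push_cast
    ring
  | succ m ih =>
    rw [Finset.sum_range_succ, ← add_assoc, ih]
    have e1 : g β ((m : ℤ) + 1) = u β ((m : ℤ) + 1) - u β (m : ℤ) := by
      rw [pascal hβ ((m : ℤ) + 1), add_sub_cancel_right]
    have e2 : g β (-(m : ℤ) - 1) = u β (-(m : ℤ) - 1) - u β (-(m : ℤ) - 1 - 1) := by
      rw [pascal hβ (-(m : ℤ) - 1)]
    have e3 : u β (-(m : ℤ) - 1) = -u β (m : ℤ) := u_neg β m
    have e4 : u β (-(m : ℤ) - 1 - 1) = -u β ((m : ℤ) + 1) := by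
      rw [show -(m : ℤ) - 1 - 1 = -((m : ℤ) + 1) - 1 by ring]
      exact u_neg β ((m : ℤ) + 1)
    rw [e1, e2, e3, e4]
    push_cast
    ring

/-- The first-column entries of the R. Chan circulant approximation of the Toeplitz
matrix `G` of size `(M−1)`: `r_0 = g_0^{(β)}`, `r_k = g_k^{(β)} + g_{k−(M−1)}^{(β)}`
for `1 ≤ k ≤ M−2`. -/
noncomputable def rchan (β : ℝ) (M : ℕ) (k : ℤ) : ℝ :=
  if k = 0 then g β 0 else g β k + g β (k - ((M : ℤ) - 1))

/-- The R. Chan-based circulant preconditioner `C = c I + σ K h^{−β} c(G)`, with entries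
`C_{ij} = c δ_{ij} + σ K h^{−β} r_{(i−j) mod (M−1)}`. -/
noncomputable def Cmat (β : ℝ) (M : ℕ) (K h σ c : ℝ) :
    Matrix (Fin (M - 1)) (Fin (M - 1)) ℝ :=
  Matrix.of fun i j =>
    (if i = j then c else 0) +
      σ * K * h ^ (-β) * rchan β M (((i : ℤ) - (j : ℤ)) % ((M : ℤ) - 1))

/-- Lemma 2.10: the R. Chan-based circulant preconditioner is symmetric and
positive definite. -/
theorem Cmat_isSymm_posDef (β : ℝ) (hβ1 : 1 < β) (hβ2 : β ≤ 2) (M : ℕ) (hM : 2 ≤ M)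
    (K h σ c : ℝ) (hK : 0 < K) (hh : 0 < h) (hσ1 : 0 < σ) (hσ2 : σ ≤ 1) (hc : 0 < c) :
    (Cmat β M K h σ c).IsSymm ∧ (Cmat β M K h σ c).PosDef := by
  have hβ0 : 0 < β := by linarith
  haveI : NeZero (M - 1) := ⟨by omega⟩
  have hMn : (M : ℤ) - 1 = ((M - 1 : ℕ) : ℤ) := by omega
  set t := σ * K * h ^ (-β) with ht
  have ht0 : 0 < t := by
    have : (0 : ℝ) < h ^ (-β) := Real.rpow_pos_of_pos hh _
    positivity
  set ρ : Fin (M - 1) → ℝ := fun k => rchan β M ((k : ℕ) : ℤ) with hρ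
  -- the mod computation
  have key : ∀ i j : Fin (M - 1), (((i : ℕ) : ℤ) - ((j : ℕ) : ℤ)) % ((M : ℤ) - 1)
      = (((i - j : Fin (M - 1)) : ℕ) : ℤ) := by
    intro i j
    have h1 : ((i - j : Fin (M - 1)) : ℕ) = (M - 1 - (j : ℕ) + (i : ℕ)) % (M - 1) := by
      rw [Fin.sub_def]
    rw [h1]
    push_cast
    have e : ((M - 1 - (j : ℕ) + (i : ℕ) : ℕ) : ℤ) = (((i : ℕ) : ℤ) - ((j : ℕ) : ℤ)) + ((M : ℤ) - 1) := by
      have hj' := j.isLt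
      omega
    push_cast at e
    rw [e, ← hMn]
    exact Int.emod_eq_add_self_emod
  have hentry : ∀ i j : Fin (M - 1), Cmat β M K h σ c i j
      = (if i = j then c else 0) + t * ρ (i - j) := by
    intro i j
    show (if i = j then c else 0) + t * rchan β M ((((i : ℕ) : ℤ) - ((j : ℕ) : ℤ)) % ((M : ℤ) - 1))
      = (if i = j then c else 0) + t * ρ (i - j)
    rw [key i j, hρ]
  -- properties of ρ
  have hρ0 : ρ 0 = g β 0 := by simp [hρ, rchan]
  have hρneg : ∀ k : Fin (M - 1), ρ (-k) = ρ k := by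
    intro k
    rcases eq_or_ne k 0 with hk | hk
    · rw [hk, neg_zero]
    · have h1 : (k : ℕ) ≠ 0 := fun h0 => hk (Fin.ext (by simp [h0]))
      have h2 : (k : ℕ) < M - 1 := k.isLt
      have hval : ((-k : Fin (M - 1)) : ℕ) = M - 1 - (k : ℕ) := by
        rw [Fin.neg_def]
        show (M - 1 - (k : ℕ)) % (M - 1) = M - 1 - (k : ℕ)
        exact Nat.mod_eq_of_lt (by omega)
      simp only [hρ]
      rw [hval, rchan, rchan, if_neg (by omega), if_neg (by omega), hMn]
      have e1 : ((M - 1 - (k : ℕ) : ℕ) : ℤ) = ((M - 1 : ℕ) : ℤ) - ((k : ℕ) : ℤ) := by omega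
      rw [e1]
      have e2 : ((M - 1 : ℕ) : ℤ) - ((k : ℕ) : ℤ) - ((M - 1 : ℕ) : ℤ) = -((k : ℕ) : ℤ) := by ring
      have e3 : ((M - 1 : ℕ) : ℤ) - ((k : ℕ) : ℤ) = -(((k : ℕ) : ℤ) - ((M - 1 : ℕ) : ℤ)) := by
        ring
      rw [e2, e3, g_even, g_even]
      ring
  have hρle : ∀ k : Fin (M - 1), k ≠ 0 → ρ k ≤ 0 := by
    intro k hk
    have h1 : (k : ℕ) ≠ 0 := fun h0 => hk (Fin.ext (by simp [h0]))
    have h2 : (k : ℕ) < M - 1 := k.isLt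
    simp only [hρ]
    rw [rchan, if_neg (by omega), hMn]
    have g1 : g β ((k : ℕ) : ℤ) ≤ 0 := g_nonpos hβ0 hβ2 (by omega)
    have g2 : g β (((k : ℕ) : ℤ) - ((M - 1 : ℕ) : ℤ)) ≤ 0 := g_nonpos hβ0 hβ2 (by omega)
    linarith
  -- total sum of ρ
  obtain ⟨m, hm⟩ : ∃ m, M - 1 = m + 1 := ⟨M - 2, by omega⟩
  have hsum : ∑ k : Fin (M - 1), ρ k = 2 * u β (m : ℤ) := by
    have h0 : ∑ k : Fin (M - 1), ρ k = ∑ k ∈ Finset.range (M - 1), rchan β M (k : ℤ) :=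
      Fin.sum_univ_eq_sum_range (fun k => rchan β M (k : ℤ)) (M - 1)
    rw [h0, hm, Finset.sum_range_succ']
    have hf0 : rchan β M ((0 : ℕ) : ℤ) = g β 0 := by rw [rchan, if_pos (by norm_num)]
    have hstep : ∀ i ∈ Finset.range m, rchan β M ((i + 1 : ℕ) : ℤ)
        = g β ((i : ℤ) + 1) + g β ((i : ℤ) - (m : ℤ)) := by
      intro i hi
      rw [rchan, if_neg (by omega), hMn]
      have e2 : ((i + 1 : ℕ) : ℤ) - ((M - 1 : ℕ) : ℤ) = (i : ℤ) - (m : ℤ) := by omega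
      have e1 : ((i + 1 : ℕ) : ℤ) = (i : ℤ) + 1 := by omega
      rw [e2, e1]
    rw [Finset.sum_congr rfl hstep, hf0, Finset.sum_add_distrib]
    have hrefl : ∑ i ∈ Finset.range m, g β ((i : ℤ) - (m : ℤ))
        = ∑ i ∈ Finset.range m, g β (-(i : ℤ) - 1) := by
      rw [← Finset.sum_range_reflect (fun i => g β ((i : ℤ) - (m : ℤ))) m]
      refine Finset.sum_congr rfl fun i hi => ?_
      have hi' : i < m := Finset.mem_range.mp hi
      have : ((m - 1 - i : ℕ) : ℤ) - (m : ℤ) = -(i : ℤ) - 1 := by omega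
      rw [this]
    rw [hrefl]
    have hTG := sum_g hβ0 (β := β) m
    rw [← hTG, Finset.sum_add_distrib]
    ring
  have humn : 0 ≤ u β (m : ℤ) := u_nonneg hβ0 hβ2 m
  -- symmetry
  have hsymm : (Cmat β M K h σ c).IsSymm := by
    rw [Matrix.IsSymm]
    ext i j
    show Cmat β M K h σ c j i = Cmat β M K h σ c i j
    rw [hentry, hentry]
    have e1 : (j - i : Fin (M - 1)) = -(i - j) := (neg_sub i j).symm
    rw [e1, hρneg]
    congr 1
    simp [eq_comm]
  refine ⟨hsymm, ?_⟩
  -- positive definiteness via diagonal dominance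
  apply posDef_of_dominant _ hsymm c hc
  intro i
  have hdiag : Cmat β M K h σ c i i = t * g β 0 + c := by
    rw [hentry, if_pos rfl, sub_self, hρ0]; ring
  rw [hdiag]
  have hoff : ∀ j ∈ Finset.univ.erase i, |Cmat β M K h σ c i j| = -(t * ρ (i - j)) := by
    intro j hj
    have hij : j ≠ i := Finset.ne_of_mem_erase hj
    rw [hentry, if_neg (Ne.symm hij), zero_add]
    exact abs_of_nonpos (mul_nonpos_iff.mpr (Or.inl ⟨ht0.le,
      hρle _ (sub_ne_zero.mpr (Ne.symm hij))⟩))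
  rw [Finset.sum_congr rfl hoff]
  -- reindex the sum
  have hre : ∑ j ∈ Finset.univ.erase i, -(t * ρ (i - j))
      = ∑ k ∈ Finset.univ.erase 0, -(t * ρ k) := by
    refine Finset.sum_nbij' (i := fun j => i - j) (j := fun k => i - k) ?_ ?_ ?_ ?_ ?_
    · intro j hj
      exact Finset.mem_erase.mpr ⟨sub_ne_zero.mpr (Ne.symm (Finset.ne_of_mem_erase hj)),
        Finset.mem_univ _⟩
    · intro k hk
      refine Finset.mem_erase.mpr ⟨?_, Finset.mem_univ _⟩
      intro hcon
      exact (Finset.ne_of_mem_erase hk) (sub_eq_self.mp hcon)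
    · intro j _; exact sub_sub_cancel i j
    · intro k _; exact sub_sub_cancel i k
    · intro j _; rfl
  rw [hre]
  have hsplit : t * ρ 0 + ∑ k ∈ Finset.univ.erase 0, t * ρ k = ∑ k : Fin (M - 1), t * ρ k :=
    Finset.add_sum_erase Finset.univ (fun k : Fin (M - 1) => t * ρ k)
      (Finset.mem_univ (0 : Fin (M - 1)))
  have hS : 0 ≤ ∑ k : Fin (M - 1), t * ρ k := by
    rw [← Finset.mul_sum, hsum]
    positivity
  have hneg : ∑ k ∈ Finset.univ.erase 0, -(t * ρ k)
      = -∑ k ∈ Finset.univ.erase 0, t * ρ k := by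
    rw [Finset.sum_neg_distrib]
  rw [hneg]
  have h1 : ∑ k ∈ Finset.univ.erase 0, t * ρ k
      = (∑ k : Fin (M - 1), t * ρ k) - t * ρ 0 := by
    rw [← hsplit]; ring
  rw [h1, hρ0]
  linarith
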